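/- For each η ∈ (0,1), define ψ_η(x) = (2/ln(η⁻¹)) ∫_0^{|x|} (∫_0^y (1/z)·χ_{[η, η^{1/2}]}(z) dz) dy. Then for all x ∈ ℝ, |x| ≤ ψ_η(x) + √η. -/

import Mathlib

open MeasureTheory intervalIntegral

open Real Set

/-! The inner integral `G y = ∫_0^y χ_{[η,√η]}(z)/z dz` is nonnegative and equals `ln(η⁻¹)/2` once
`y ≥ √η`, so `∫_0^{|x|} G ≥ (ln(η⁻¹)/2)(|x| - √η)`, which is the claim after multiplying by
`2/ln(η⁻¹)`. -/

lemma one_div_mul_indicator_one_eq (s : Set ℝ) :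
    (fun z : ℝ => 1 / z * s.indicator (fun _ => (1 : ℝ)) z) = s.indicator fun z => z⁻¹ := by
  ext z
  by_cases hz : z ∈ s <;> simp [hz]

section InvIndicator

variable {a b : ℝ}

lemma integrable_indicator_Icc_inv (ha : 0 < a) :
    Integrable ((Icc a b).indicator fun z : ℝ => z⁻¹) := by
  refine (integrable_indicator_iff measurableSet_Icc).2 ?_
  exact (continuousOn_inv₀.mono fun z hz => (ha.trans_le hz.1).ne').integrableOn_Icc

lemma indicator_Icc_inv_nonneg (ha : 0 < a) (z : ℝ) :
    0 ≤ (Icc a b).indicator (fun z : ℝ => z⁻¹) z :=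
  indicator_nonneg (fun _ hz => inv_nonneg.2 (ha.le.trans hz.1)) z

lemma log_div_le_integral_indicator_Icc_inv {y : ℝ} (ha : 0 < a) (hab : a ≤ b) (hby : b ≤ y) :
    log (b / a) ≤ ∫ z in (0 : ℝ)..y, (Icc a b).indicator (fun z : ℝ => z⁻¹) z := by
  have h_on_Icc : ∫ z in a..b, (Icc a b).indicator (fun z : ℝ => z⁻¹) z = log (b / a) := by
    rw [← integral_inv_of_pos ha (ha.trans_le hab)]
    refine integral_congr fun z hz => ?_
    rw [uIcc_of_le hab] at hz
    exact indicator_of_mem hz _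
  rw [← h_on_Icc]
  exact integral_mono_interval ha.le hab hby
    (Filter.Eventually.of_forall (indicator_Icc_inv_nonneg ha))
    ((integrable_indicator_Icc_inv ha).intervalIntegrable)

end InvIndicator

lemma mul_sub_le_integral {G : ℝ → ℝ} {c s r : ℝ} (hc : 0 ≤ c) (hs : 0 ≤ s) (hr : 0 ≤ r)
    (hG : IntervalIntegrable G volume 0 r) (hG_nonneg : ∀ y ∈ Icc 0 r, 0 ≤ G y)
    (hG_ge : ∀ y ∈ Icc s r, c ≤ G y) :
    c * (r - s) ≤ ∫ y in (0 : ℝ)..r, G y := by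
  rcases le_total r s with hrs | hsr
  · calc c * (r - s) ≤ 0 := mul_nonpos_of_nonneg_of_nonpos hc (sub_nonpos.2 hrs)
      _ ≤ ∫ y in (0 : ℝ)..r, G y := integral_nonneg hr hG_nonneg
  · calc c * (r - s) = ∫ _ in s..r, c := by simp [mul_comm]
      _ ≤ ∫ y in s..r, G y :=
        integral_mono_on hsr intervalIntegrable_const (hG.mono_set ?_) hG_ge
      _ ≤ ∫ y in (0 : ℝ)..r, G y := integral_mono_interval hs hsr le_rfl ?_ hG
    · rw [uIcc_of_le hsr, uIcc_of_le hr]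
      exact Icc_subset_Icc_left hs
    · exact (ae_restrict_mem measurableSet_Ioc).mono fun y hy =>
        hG_nonneg y (Ioc_subset_Icc_self hy)

/-- For `η ∈ (0,1)` and `ψ_η(x) = (2/ln η⁻¹) ∫_0^{|x|} ∫_0^y (1/z)·χ_{[η,√η]}(z) dz dy`,
we have `|x| ≤ ψ_η(x) + √η` for all `x`. -/
theorem stmt1 (η : ℝ) (hη0 : 0 < η) (hη1 : η < 1)
    (ψ : ℝ → ℝ)
    (hψ : ∀ x : ℝ, ψ x = (2 / Real.log η⁻¹) *
      ∫ y in (0:ℝ)..|x|, ∫ z in (0:ℝ)..y,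
        (1 / z) * Set.indicator (Set.Icc η (Real.sqrt η)) (fun _ => (1:ℝ)) z) :
    ∀ x : ℝ, |x| ≤ ψ x + Real.sqrt η := by
  intro x
  simp_rw [hψ x, one_div_mul_indicator_one_eq]
  set G := fun y => ∫ z in (0 : ℝ)..y, (Icc η √η).indicator (fun z : ℝ => z⁻¹) z
  have hL : 0 < log η⁻¹ := log_pos (one_lt_inv_iff₀.2 ⟨hη0, hη1⟩)
  have h_le_sqrt : η ≤ √η := le_sqrt_of_sq_le (by nlinarith)
  have h_log : log (√η / η) = log η⁻¹ / 2 := by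
    rw [log_div (sqrt_pos.2 hη0).ne' hη0.ne', log_sqrt hη0.le, log_inv]
    ring
  have hG_cont : Continuous G :=
    continuous_primitive (fun _ _ => (integrable_indicator_Icc_inv hη0).intervalIntegrable) 0
  have key : log η⁻¹ / 2 * (|x| - √η) ≤ ∫ y in (0 : ℝ)..|x|, G y :=
    mul_sub_le_integral (by positivity) (sqrt_nonneg η) (abs_nonneg x)
      (hG_cont.intervalIntegrable _ _)
      (fun y hy => integral_nonneg hy.1 fun z _ => indicator_Icc_inv_nonneg hη0 z)
      (fun y hy => h_log ▸ log_div_le_integral_indicator_Icc_inv hη0 h_le_sqrt hy.1)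
  rw [← sub_le_iff_le_add, div_mul_eq_mul_div, le_div_iff₀ hL]
  linarith
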